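/- arXiv:2502.20091 — 3 statements merged into one kernel-verified Lean document; each statement's English description precedes it below -/
import Mathlib

section
/- (Minty's method) Let F : D(F) ⊆ H → H be monotone, and let D ⊆ D(F) and operators F_k : D → H (k ∈ ℕ) satisfy: (1) each F_k is monotone on D; (2) F_k(v) → F(v) strongly in H for every v ∈ D; (3) for every v ∈ D(F) there exists a sequence v_k ∈ D with v_k → v in H and F(v_k) ⇀ F(v) weakly in H; (4) there exist u_k ∈ D with ⟨F_k(u_k), u_k - v⟩ ≤ 0 for all v ∈ D; (5) a subsequence of (u_k) converges weakly to some ū ∈ H. Then ū satisfies ⟨F(v), ū - v⟩ ≤ 0 for all v ∈ D(F), i.e., ū is a weak solution of the variational inequality for F. -/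
open Filter Topology
open scoped InnerProductSpace

/-!
Monotonicity of `F_k` turns each strong solution `u_k` of the approximate problem into a solution
of the weak (Minty) inequality `⟪F_k v, u_k - v⟫ ≤ 0` on `D`. Such inequalities pass to the limit,
because the pairing of a weakly convergent sequence with a strongly convergent one converges
(weakly convergent sequences being bounded by Banach–Steinhaus). Taking first `k → ∞` along the
subsequence gives the weak inequality for `F` on `D`, and then approximating `v ∈ D(F)` by
`v_k ∈ D` with `F v_k ⇀ F v` extends it to `D(F)`.
-/

section

variable {H : Type*} [NormedAddCommGroup H] [InnerProductSpace ℝ H]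

def WeakTendsto (x : ℕ → H) (y : H) : Prop :=
  ∀ w : H, Tendsto (fun k => ⟪w, x k⟫_ℝ) atTop (𝓝 ⟪w, y⟫_ℝ)

def MonotoneOperatorOn (G : H → H) (S : Set H) : Prop :=
  ∀ u ∈ S, ∀ v ∈ S, 0 ≤ ⟪G u - G v, u - v⟫_ℝ

def SolvesVI (G : H → H) (S : Set H) (u : H) : Prop :=
  ∀ v ∈ S, ⟪G u, u - v⟫_ℝ ≤ 0

def SolvesWeakVI (G : H → H) (S : Set H) (u : H) : Prop :=
  ∀ v ∈ S, ⟪G v, u - v⟫_ℝ ≤ 0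

theorem WeakTendsto.exists_norm_le [CompleteSpace H] {x : ℕ → H} {y : H}
    (hx : WeakTendsto x y) : ∃ C, ∀ k, ‖x k‖ ≤ C := by
  obtain ⟨C, hC⟩ := banach_steinhaus (g := fun k => innerSL ℝ (x k)) fun w => by
    obtain ⟨M, hM⟩ := isBounded_iff_forall_norm_le.1 (hx w).cauchySeq.isBounded_range
    exact ⟨M, fun k => by simpa [real_inner_comm] using hM _ ⟨k, rfl⟩⟩
  exact ⟨C, fun k => by simpa using hC k⟩

theorem WeakTendsto.tendsto_inner [CompleteSpace H] {x : ℕ → H} {x₀ : H} (hx : WeakTendsto x x₀)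
    {y : ℕ → H} {y₀ : H} (hy : Tendsto y atTop (𝓝 y₀)) :
    Tendsto (fun k => ⟪y k, x k⟫_ℝ) atTop (𝓝 ⟪y₀, x₀⟫_ℝ) := by
  obtain ⟨C, hC⟩ := hx.exists_norm_le
  have hsplit : ∀ k, ⟪y k, x k⟫_ℝ = ⟪y k - y₀, x k⟫_ℝ + ⟪y₀, x k⟫_ℝ := fun k => by
    rw [inner_sub_left]; ring
  have hsmall : Tendsto (fun k => ⟪y k - y₀, x k⟫_ℝ) atTop (𝓝 0) := by
    have hbound : Tendsto (fun k => ‖y k - y₀‖ * C) atTop (𝓝 0) := by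
      simpa using (tendsto_iff_norm_sub_tendsto_zero.1 hy).mul_const C
    refine squeeze_zero_norm (fun k => ?_) hbound
    calc ‖⟪y k - y₀, x k⟫_ℝ‖ ≤ ‖y k - y₀‖ * ‖x k‖ := norm_inner_le_norm _ _
      _ ≤ ‖y k - y₀‖ * C := by gcongr; exact hC k
  simpa only [hsplit, zero_add] using hsmall.add (hx y₀)

theorem SolvesVI.solvesWeakVI {G : H → H} {S : Set H} {u : H} (hG : MonotoneOperatorOn G S)
    (hu : u ∈ S) (hVI : SolvesVI G S u) : SolvesWeakVI G S u := fun v hv => by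
  have hmono := hG u hu v hv
  rw [inner_sub_left] at hmono
  linarith [hVI v hv]

theorem SolvesWeakVI.of_tendsto [CompleteSpace H] {G : H → H} {Gk : ℕ → H → H} {S : Set H}
    {u : ℕ → H} {u₀ : H} (hG : ∀ v ∈ S, Tendsto (fun k => Gk k v) atTop (𝓝 (G v)))
    (hu : WeakTendsto u u₀) (hsol : ∀ k, SolvesWeakVI (Gk k) S (u k)) :
    SolvesWeakVI G S u₀ := fun v hv => by
  have hlim : Tendsto (fun k => ⟪Gk k v, u k - v⟫_ℝ) atTop (𝓝 ⟪G v, u₀ - v⟫_ℝ) := by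
    refine WeakTendsto.tendsto_inner (fun w => ?_) (hG v hv)
    simpa only [inner_sub_right] using (hu w).sub_const ⟪w, v⟫_ℝ
  exact le_of_tendsto' hlim fun k => hsol k v hv

theorem SolvesWeakVI.of_approx [CompleteSpace H] {G : H → H} {S T : Set H} {u : H}
    (hsol : SolvesWeakVI G S u)
    (happrox : ∀ v ∈ T, ∃ vk : ℕ → H, (∀ k, vk k ∈ S) ∧ Tendsto vk atTop (𝓝 v) ∧
      WeakTendsto (G ∘ vk) (G v)) :
    SolvesWeakVI G T u := fun v hv => by
  obtain ⟨vk, hvkS, hvk, hGvk⟩ := happrox v hv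
  have hlim : Tendsto (fun k => ⟪u - vk k, G (vk k)⟫_ℝ) atTop (𝓝 ⟪u - v, G v⟫_ℝ) :=
    hGvk.tendsto_inner (tendsto_const_nhds.sub hvk)
  rw [real_inner_comm]
  exact le_of_tendsto' hlim fun k => by rw [real_inner_comm]; exact hsol (vk k) (hvkS k)

end

theorem minty_method_general
    {H : Type*} [NormedAddCommGroup H] [InnerProductSpace ℝ H] [CompleteSpace H]
    (DF : Set H) (F : H → H)
    (D : Set H)
    (Fk : ℕ → H → H)
    -- (1) monotonicity of each `Fk` on `D`
    (hFkmono : ∀ k : ℕ, ∀ u ∈ D, ∀ v ∈ D, (0 : ℝ) ≤ inner ℝ (Fk k u - Fk k v) (u - v))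
    -- (2) strong convergence `Fk v → F v` for `v ∈ D`
    (happrox : ∀ v ∈ D, Tendsto (fun k => Fk k v) atTop (𝓝 (F v)))
    -- (3) lower semicontinuity-type condition
    (hlsc : ∀ v ∈ DF, ∃ vk : ℕ → H, (∀ k, vk k ∈ D) ∧
      Tendsto vk atTop (𝓝 v) ∧
      (∀ w : H, Tendsto (fun k => (inner ℝ w (F (vk k)) : ℝ)) atTop (𝓝 (inner ℝ w (F v)))))
    -- (4) strong solutions of the regularized problems
    (uk : ℕ → H) (hukD : ∀ k, uk k ∈ D)
    (hss : ∀ k : ℕ, ∀ v ∈ D, (inner ℝ (Fk k (uk k)) (uk k - v) : ℝ) ≤ 0)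
    -- (5) weak convergence of a subsequence to `ubar`
    (ubar : H) (φ : ℕ → ℕ) (hφ : StrictMono φ)
    (hweakconv : ∀ w : H, Tendsto (fun k => (inner ℝ w (uk (φ k)) : ℝ)) atTop (𝓝 (inner ℝ w ubar))) :
    ∀ v ∈ DF, (inner ℝ (F v) (ubar - v) : ℝ) ≤ 0 := by
  have hweak : ∀ k, SolvesWeakVI (Fk k) D (uk k) := fun k =>
    SolvesVI.solvesWeakVI (hFkmono k) (hukD k) (hss k)
  have hsolD : SolvesWeakVI F D ubar :=
    SolvesWeakVI.of_tendsto (fun v hv => (happrox v hv).comp hφ.tendsto_atTop) hweakconv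
      fun k => hweak (φ k)
  exact hsolD.of_approx hlsc

/-- Minty's method: given a monotone operator `F` with domain `DF` in a real Hilbert space,
a dense-enough subset `D ⊆ DF`, and monotone approximations `Fk` converging to `F` on `D`,
together with strong solutions `uk` of the approximate variational inequalities, any weak
limit `ubar` of (a subsequence of) the `uk` is a weak solution of the variational inequality
for `F`. -/
theorem minty_method
    {H : Type*} [NormedAddCommGroup H] [InnerProductSpace ℝ H] [CompleteSpace H]
    (DF : Set H) (F : H → H)
    (hFmono : ∀ u ∈ DF, ∀ v ∈ DF, (0 : ℝ) ≤ inner ℝ (F u - F v) (u - v))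
    (D : Set H) (hD : D ⊆ DF)
    (Fk : ℕ → H → H)
    -- (1) monotonicity of each `Fk` on `D`
    (hFkmono : ∀ k : ℕ, ∀ u ∈ D, ∀ v ∈ D, (0 : ℝ) ≤ inner ℝ (Fk k u - Fk k v) (u - v))
    -- (2) strong convergence `Fk v → F v` for `v ∈ D`
    (happrox : ∀ v ∈ D, Tendsto (fun k => Fk k v) atTop (𝓝 (F v)))
    -- (3) lower semicontinuity-type condition
    (hlsc : ∀ v ∈ DF, ∃ vk : ℕ → H, (∀ k, vk k ∈ D) ∧
      Tendsto vk atTop (𝓝 v) ∧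
      (∀ w : H, Tendsto (fun k => (inner ℝ w (F (vk k)) : ℝ)) atTop (𝓝 (inner ℝ w (F v)))))
    -- (4) strong solutions of the regularized problems
    (uk : ℕ → H) (hukD : ∀ k, uk k ∈ D)
    (hss : ∀ k : ℕ, ∀ v ∈ D, (inner ℝ (Fk k (uk k)) (uk k - v) : ℝ) ≤ 0)
    -- (5) weak convergence of a subsequence to `ubar`
    (ubar : H) (φ : ℕ → ℕ) (hφ : StrictMono φ)
    (hweakconv : ∀ w : H, Tendsto (fun k => (inner ℝ w (uk (φ k)) : ℝ)) atTop (𝓝 (inner ℝ w ubar))) :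
    ∀ v ∈ DF, (inner ℝ (F v) (ubar - v) : ℝ) ≤ 0 :=
  minty_method_general DF F D Fk hFkmono happrox hlsc uk hukD hss ubar φ hφ hweakconv
end

section
/- (Monotonicity of the stationary MFG operator) Let H : ℝ^d → ℝ be C² and convex, g : ℝ₀⁺ → ℝ continuous and increasing, and V, φ ∈ C(𝕋^d). Define F(m, u) = (-u - H(Du) + g(m) - V, m - div(m D_pH(Du)) - φ) on D(F) = C²(𝕋^d; ℝ₀⁺) × C¹(𝕋^d). Then for all (m₁, u₁), (m₂, u₂) ∈ D(F), ⟨F(m₁,u₁) - F(m₂,u₂), (m₁,u₁) - (m₂,u₂)⟩_{L²×L²} = ∫ m₁[H(Du₂) - H(Du₁) - D_pH(Du₁)·(Du₂ - Du₁)] + ∫ m₂[H(Du₁) - H(Du₂) - D_pH(Du₂)·(Du₁ - Du₂)] + ∫ (m₁ - m₂)(g(m₁) - g(m₂)) dx ≥ 0. -/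
noncomputable section
open MeasureTheory

/-- Euclidean space `ℝ^d`, the covering space of the torus `𝕋^d`. -/
abbrev Ed (d : ℕ) := Fin d → ℝ

/-- A fundamental domain (unit cube) for the torus `𝕋^d = ℝ^d / ℤ^d`. -/
def cube (d : ℕ) : Set (Ed d) := Set.univ.pi fun _ => Set.Icc (0:ℝ) 1

/-- `ℤ^d`-periodicity: a function on `ℝ^d` represents a function on the torus `𝕋^d`. -/
def Per {d : ℕ} (u : Ed d → ℝ) : Prop :=
  ∀ (x : Ed d) (m : Fin d → ℤ), u (x + fun i => (m i : ℝ)) = u x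

/-- `i`-th partial derivative. -/
def pd {d : ℕ} (i : Fin d) (u : Ed d → ℝ) (x : Ed d) : ℝ :=
  fderiv ℝ u x (Pi.single i 1)

/-- The gradient `Du`. -/
def grad {d : ℕ} (u : Ed d → ℝ) (x : Ed d) : Ed d := fun i => pd i u x

/-- The `i`-th component of the flux `m D_pH(Du)`. -/
def flux {d : ℕ} (H : Ed d → ℝ) (m u : Ed d → ℝ) (i : Fin d) (y : Ed d) : ℝ :=
  m y * pd i H (grad u y)

/-- The divergence `div(m D_pH(Du))`. -/
def divFlux {d : ℕ} (H : Ed d → ℝ) (m u : Ed d → ℝ) (x : Ed d) : ℝ :=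
  ∑ i, pd i (flux H m u i) x

/-- First component of the MFG operator: `-u - H(Du) + g(m) - V`. -/
def F1 {d : ℕ} (H : Ed d → ℝ) (g : ℝ → ℝ) (V : Ed d → ℝ) (m u : Ed d → ℝ) (x : Ed d) : ℝ :=
  -(u x) - H (grad u x) + g (m x) - V x

/-- Second component of the MFG operator: `m - div(m D_pH(Du)) - φ`. -/
def F2 {d : ℕ} (H : Ed d → ℝ) (φ : Ed d → ℝ) (m u : Ed d → ℝ) (x : Ed d) : ℝ :=
  m x - divFlux H m u x - φ x

/-!
Pointwise, the pairing of `F(m₁,u₁) - F(m₂,u₂)` with `(m₁ - m₂, u₁ - u₂)` differs from the sum of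
the three integrands by the divergence of the periodic field
`(m₁ D_pH(Du₁) - m₂ D_pH(Du₂)) (u₁ - u₂)`; its integral over the unit cube vanishes by the
divergence theorem, because the field takes equal values on opposite faces. The first two
integrands are `mⱼ ≥ 0` times Bregman divergences of the convex `H`, and the third is nonnegative
because `g` is increasing.
-/

lemma cube_eq_Icc (d : ℕ) : cube d = Set.Icc (0 : Ed d) 1 := Set.pi_univ_Icc _ _

lemma integrableOn_cube {d : ℕ} {f : Ed d → ℝ} (hf : Continuous f) :
    IntegrableOn f (cube d) :=
  hf.continuousOn.integrableOn_compact (by rw [cube_eq_Icc]; exact isCompact_Icc)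

lemma ConvexOn.map_sub_le_sub_of_hasFDerivAt {E : Type*} [NormedAddCommGroup E]
    [NormedSpace ℝ E] {f : E → ℝ} {f' : E →L[ℝ] ℝ} {x : E} (hf : ConvexOn ℝ Set.univ f)
    (hx : HasFDerivAt f f' x) (y : E) : f' (y - x) ≤ f y - f x := by
  let L : ℝ →ᵃ[ℝ] E := AffineMap.lineMap x y
  have hfL : HasDerivAt (f ∘ L) (f' (y - x)) 0 := by
    refine HasFDerivAt.comp_hasDerivAt (0 : ℝ) ?_ AffineMap.hasDerivAt_lineMap
    simpa [L] using hx
  simpa [L, slope] using (hf.comp_affineMap L).le_slope_of_hasDerivAt trivial trivial one_pos hfL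

section PartialDerivatives

variable {d : ℕ}

lemma continuous_pd {f : Ed d → ℝ} (hf : ContDiff ℝ 1 f) (i : Fin d) : Continuous (pd i f) :=
  (hf.continuous_fderiv one_ne_zero).clm_apply continuous_const

lemma fderiv_apply_eq_sum_pd (f : Ed d → ℝ) (x v : Ed d) :
    fderiv ℝ f x v = ∑ i, pd i f x * v i := by
  conv_lhs => rw [pi_eq_sum_univ' v]
  simp [pd, mul_comm]

lemma pd_sub {f g : Ed d → ℝ} {x : Ed d} (i : Fin d) (hf : DifferentiableAt ℝ f x)
    (hg : DifferentiableAt ℝ g x) : pd i (fun y => f y - g y) x = pd i f x - pd i g x := by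
  simp [pd, fderiv_fun_sub hf hg]

lemma pd_mul {f g : Ed d → ℝ} {x : Ed d} (i : Fin d) (hf : DifferentiableAt ℝ f x)
    (hg : DifferentiableAt ℝ g x) :
    pd i (fun y => f y * g y) x = pd i f x * g x + f x * pd i g x := by
  simp only [pd, fderiv_fun_mul hf hg, add_apply, smul_apply, smul_eq_mul]
  ring

lemma sum_pd_mul {f : Fin d → Ed d → ℝ} {w : Ed d → ℝ} {x : Ed d}
    (hf : ∀ i, DifferentiableAt ℝ (f i) x) (hw : DifferentiableAt ℝ w x) :
    ∑ i, pd i (fun y => f i y * w y) x = (∑ i, pd i (f i) x) * w x + ∑ i, f i x * pd i w x := by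
  simp only [pd_mul _ (hf _) hw, Finset.sum_add_distrib, Finset.sum_mul]

end PartialDerivatives

namespace Per

variable {d : ℕ} {u w : Ed d → ℝ}

lemma sub (hu : Per u) (hw : Per w) : Per fun x => u x - w x := fun x c => by
  simp only [hu x c, hw x c]

lemma mul (hu : Per u) (hw : Per w) : Per fun x => u x * w x := fun x c => by
  simp only [hu x c, hw x c]

lemma pd (hu : Per u) (i : Fin d) : Per (pd i u) := fun x c => by
  simp only [_root_.pd, ← fderiv_comp_add_right, hu _ c]

lemma grad (hu : Per u) (x : Ed d) (c : Fin d → ℤ) :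
    grad u (x + fun i => (c i : ℝ)) = grad u x :=
  funext fun i => hu.pd i x c

lemma flux (H : Ed d → ℝ) (hm : Per w) (hu : Per u) (i : Fin d) : Per (flux H w u i) :=
  fun x c => by simp only [_root_.flux, hm x c, hu.grad x c]

end Per

lemma insertNth_one_eq_insertNth_zero_add {n : ℕ} (i : Fin (n + 1)) (y : Ed n) :
    i.insertNth (1 : ℝ) y
      = i.insertNth (0 : ℝ) y + fun j => ((Pi.single i 1 : Fin (n + 1) → ℤ) j : ℝ) := by
  funext j
  rcases eq_or_ne j i with rfl | hj
  · simp
  · obtain ⟨k, rfl⟩ := Fin.exists_succAbove_eq hj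
    simp [Pi.single_apply, Fin.succAbove_ne i k]

lemma integral_cube_sum_pd_eq_zero {d : ℕ} {f : Fin d → Ed d → ℝ}
    (hf : ∀ i, ContDiff ℝ 1 (f i)) (hper : ∀ i, Per (f i)) :
    ∫ x in cube d, ∑ i, pd i (f i) x = 0 := by
  cases d with
  | zero => simp
  | succ n =>
    have hint : IntegrableOn (fun x => ∑ i, pd i (f i) x) (cube (n + 1)) :=
      integrableOn_cube (continuous_finsetSum _ fun i _ => continuous_pd (hf i) i)
    rw [cube_eq_Icc] at hint ⊢
    refine (integral_divergence_of_hasFDerivAt_off_countable' 0 1 (fun _ => zero_le_one) f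
      (fun i x => fderiv ℝ (f i) x) ∅ Set.countable_empty (fun i => (hf i).continuous.continuousOn)
      (fun x _ i => ((hf i).differentiable one_ne_zero x).hasFDerivAt) hint).trans ?_
    refine Finset.sum_eq_zero fun i _ => sub_eq_zero.2 <| setIntegral_congr_fun
      measurableSet_Icc fun y _ => ?_
    simp only [Pi.zero_apply, Pi.one_apply, insertNth_one_eq_insertNth_zero_add, hper i _ _]

def bregman {d : ℕ} (H : Ed d → ℝ) (p q : Ed d) : ℝ :=
  H q - H p - ∑ i, pd i H p * (q i - p i)

lemma ConvexOn.bregman_nonneg {d : ℕ} {H : Ed d → ℝ} (hc : ConvexOn ℝ Set.univ H)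
    {p : Ed d} (hH : DifferentiableAt ℝ H p) (q : Ed d) : 0 ≤ bregman H p q := by
  rw [bregman, sub_nonneg]
  simpa [fderiv_apply_eq_sum_pd] using hc.map_sub_le_sub_of_hasFDerivAt hH.hasFDerivAt q

lemma integral_add_eq_of_forall_add_eq {α : Type*} [MeasurableSpace α] {μ : Measure α}
    {A B D R₁ R₂ R₃ : α → ℝ} (hA : Integrable A μ) (hB : Integrable B μ) (hD : Integrable D μ)
    (hR₁ : Integrable R₁ μ) (hR₂ : Integrable R₂ μ) (hR₃ : Integrable R₃ μ)
    (hD₀ : ∫ x, D x ∂μ = 0) (h : ∀ x, A x + B x + D x = R₁ x + R₂ x + R₃ x) :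
    ∫ x, A x ∂μ + ∫ x, B x ∂μ = ∫ x, R₁ x ∂μ + ∫ x, R₂ x ∂μ + ∫ x, R₃ x ∂μ := by
  have hAB : Integrable (fun x => A x + B x) μ := hA.add hB
  have hR₁₂ : Integrable (fun x => R₁ x + R₂ x) μ := hR₁.add hR₂
  rw [← integral_add hA hB, ← add_zero (∫ x, A x + B x ∂μ), ← hD₀, ← integral_add hAB hD,
    ← integral_add hR₁ hR₂, ← integral_add hR₁₂ hR₃]
  exact integral_congr_ae (ae_of_all _ h)

section Pairing

variable {d : ℕ} (H : Ed d → ℝ) (g : ℝ → ℝ) (V φ : Ed d → ℝ) (m₁ u₁ m₂ u₂ : Ed d → ℝ)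

lemma F1_sub_F1 (x : Ed d) : F1 H g V m₁ u₁ x - F1 H g V m₂ u₂ x
    = -(u₁ x - u₂ x) - (H (grad u₁ x) - H (grad u₂ x)) + (g (m₁ x) - g (m₂ x)) := by
  simp only [F1]; ring

lemma F2_sub_F2 (x : Ed d) : F2 H φ m₁ u₁ x - F2 H φ m₂ u₂ x
    = (m₁ x - m₂ x) - (divFlux H m₁ u₁ x - divFlux H m₂ u₂ x) := by
  simp only [F2]; ring

lemma pairing_add_sum_pd_eq {x : Ed d} (hu₁ : DifferentiableAt ℝ u₁ x)
    (hu₂ : DifferentiableAt ℝ u₂ x) (hflux₁ : ∀ i, DifferentiableAt ℝ (flux H m₁ u₁ i) x)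
    (hflux₂ : ∀ i, DifferentiableAt ℝ (flux H m₂ u₂ i) x) :
    (F1 H g V m₁ u₁ x - F1 H g V m₂ u₂ x) * (m₁ x - m₂ x)
      + (F2 H φ m₁ u₁ x - F2 H φ m₂ u₂ x) * (u₁ x - u₂ x)
      + ∑ i, pd i (fun y => (flux H m₁ u₁ i y - flux H m₂ u₂ i y) * (u₁ y - u₂ y)) x
    = m₁ x * bregman H (grad u₁ x) (grad u₂ x) + m₂ x * bregman H (grad u₂ x) (grad u₁ x)
      + (m₁ x - m₂ x) * (g (m₁ x) - g (m₂ x)) := by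
  have hdiv : ∑ i, pd i (fun y => (flux H m₁ u₁ i y - flux H m₂ u₂ i y) * (u₁ y - u₂ y)) x
      = (divFlux H m₁ u₁ x - divFlux H m₂ u₂ x) * (u₁ x - u₂ x)
        + ∑ i, (flux H m₁ u₁ i x - flux H m₂ u₂ i x) * (pd i u₁ x - pd i u₂ x) := by
    rw [sum_pd_mul (f := fun i y => flux H m₁ u₁ i y - flux H m₂ u₂ i y)
      (w := fun y => u₁ y - u₂ y) (fun i => (hflux₁ i).sub (hflux₂ i)) (hu₁.sub hu₂)]
    simp only [pd_sub _ (hflux₁ _) (hflux₂ _), pd_sub _ hu₁ hu₂, divFlux, Finset.sum_sub_distrib]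
  have hflux : ∑ i, (flux H m₁ u₁ i x - flux H m₂ u₂ i x) * (pd i u₁ x - pd i u₂ x)
      = m₁ x * ∑ i, pd i H (grad u₁ x) * (pd i u₁ x - pd i u₂ x)
        - m₂ x * ∑ i, pd i H (grad u₂ x) * (pd i u₁ x - pd i u₂ x) := by
    simp only [Finset.mul_sum, ← Finset.sum_sub_distrib, flux]
    exact Finset.sum_congr rfl fun i _ => by ring
  have hswap : ∑ i, pd i H (grad u₁ x) * (pd i u₂ x - pd i u₁ x)
      = -∑ i, pd i H (grad u₁ x) * (pd i u₁ x - pd i u₂ x) := by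
    simp only [← Finset.sum_neg_distrib, ← mul_neg, neg_sub]
  rw [F1_sub_F1, F2_sub_F2, hdiv, hflux, bregman, bregman]
  simp only [grad]
  rw [hswap]
  ring

end Pairing

section Integrated

variable {d : ℕ} (H : Ed d → ℝ) (g : ℝ → ℝ) (V φ : Ed d → ℝ) {m₁ u₁ m₂ u₂ : Ed d → ℝ}

lemma integral_pairing_eq (hH : ContDiff ℝ 1 H)
    (hgm₁ : Continuous fun x => g (m₁ x)) (hgm₂ : Continuous fun x => g (m₂ x))
    (hm₁ : Continuous m₁) (hm₁per : Per m₁) (hu₁ : ContDiff ℝ 1 u₁) (hu₁per : Per u₁)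
    (hflux₁ : ∀ i, ContDiff ℝ 1 (flux H m₁ u₁ i))
    (hm₂ : Continuous m₂) (hm₂per : Per m₂) (hu₂ : ContDiff ℝ 1 u₂) (hu₂per : Per u₂)
    (hflux₂ : ∀ i, ContDiff ℝ 1 (flux H m₂ u₂ i)) :
    (∫ x in cube d, (F1 H g V m₁ u₁ x - F1 H g V m₂ u₂ x) * (m₁ x - m₂ x))
        + ∫ x in cube d, (F2 H φ m₁ u₁ x - F2 H φ m₂ u₂ x) * (u₁ x - u₂ x)
      = (∫ x in cube d, m₁ x * bregman H (grad u₁ x) (grad u₂ x))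
        + (∫ x in cube d, m₂ x * bregman H (grad u₂ x) (grad u₁ x))
        + ∫ x in cube d, (m₁ x - m₂ x) * (g (m₁ x) - g (m₂ x)) := by
  have hHc := hH.continuous
  have hDH := continuous_pd hH
  have hu₁c := hu₁.continuous
  have hu₂c := hu₂.continuous
  have hgrad₁ : Continuous (grad u₁) := continuous_pi (continuous_pd hu₁)
  have hgrad₂ : Continuous (grad u₂) := continuous_pi (continuous_pd hu₂)
  have hdiv₁ : Continuous (divFlux H m₁ u₁) :=
    continuous_finsetSum _ fun i _ => continuous_pd (hflux₁ i) i
  have hdiv₂ : Continuous (divFlux H m₂ u₂) :=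
    continuous_finsetSum _ fun i _ => continuous_pd (hflux₂ i) i
  have hJ : ∀ i, ContDiff ℝ 1 fun y => (flux H m₁ u₁ i y - flux H m₂ u₂ i y) * (u₁ y - u₂ y) :=
    fun i => ((hflux₁ i).sub (hflux₂ i)).mul (hu₁.sub hu₂)
  have hJper : ∀ i, Per fun y => (flux H m₁ u₁ i y - flux H m₂ u₂ i y) * (u₁ y - u₂ y) :=
    fun i => ((hm₁per.flux H hu₁per i).sub (hm₂per.flux H hu₂per i)).mul (hu₁per.sub hu₂per)
  refine integral_add_eq_of_forall_add_eq (integrableOn_cube ?_) (integrableOn_cube ?_)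
    (integrableOn_cube (continuous_finsetSum _ fun i _ => continuous_pd (hJ i) i))
    (integrableOn_cube ?_) (integrableOn_cube ?_) (integrableOn_cube ?_)
    (integral_cube_sum_pd_eq_zero hJ hJper) fun x => pairing_add_sum_pd_eq H g V φ m₁ u₁ m₂ u₂
      (hu₁.differentiable one_ne_zero x) (hu₂.differentiable one_ne_zero x)
      (fun i => (hflux₁ i).differentiable one_ne_zero x)
      (fun i => (hflux₂ i).differentiable one_ne_zero x)
  · simp only [F1_sub_F1]
    exact .mul (.add (by fun_prop) (hgm₁.sub hgm₂)) (by fun_prop)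
  · simp only [F2_sub_F2]
    fun_prop
  · simp only [bregman]
    fun_prop
  · simp only [bregman]
    fun_prop
  · exact (hm₁.sub hm₂).mul (hgm₁.sub hgm₂)

lemma integral_bregman_add_nonneg (hc : ConvexOn ℝ Set.univ H) (hH : Differentiable ℝ H)
    (hg : MonotoneOn g (Set.Ici 0)) (hm₁ : ∀ x, 0 ≤ m₁ x) (hm₂ : ∀ x, 0 ≤ m₂ x) :
    0 ≤ (∫ x in cube d, m₁ x * bregman H (grad u₁ x) (grad u₂ x))
        + (∫ x in cube d, m₂ x * bregman H (grad u₂ x) (grad u₁ x))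
        + ∫ x in cube d, (m₁ x - m₂ x) * (g (m₁ x) - g (m₂ x)) := by
  refine add_nonneg (add_nonneg ?_ ?_) ?_ <;> refine integral_nonneg fun x => ?_
  · exact mul_nonneg (hm₁ x) (hc.bregman_nonneg (hH _) _)
  · exact mul_nonneg (hm₂ x) (hc.bregman_nonneg (hH _) _)
  · simpa [mul_comm] using (monovaryOn_id_iff.2 hg).sub_mul_sub_nonneg (hm₂ x) (hm₁ x)

end Integrated

theorem stationary_MFG_monotone_general {d : ℕ}
    (H : Ed d → ℝ) (g : ℝ → ℝ) (V φ : Ed d → ℝ)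
    (hH : ContDiff ℝ 2 H) (hHconv : ConvexOn ℝ Set.univ H)
    (hgc : ContinuousOn g (Set.Ici 0)) (hgmono : MonotoneOn g (Set.Ici 0))
    (m₁ u₁ m₂ u₂ : Ed d → ℝ)
    (hm₁ : ContDiff ℝ 2 m₁) (hm₁per : Per m₁) (hm₁nn : ∀ x, 0 ≤ m₁ x)
    (hu₁ : ContDiff ℝ 1 u₁) (hu₁per : Per u₁)
    (hflux₁ : ∀ i, ContDiff ℝ 1 (flux H m₁ u₁ i))
    (hm₂ : ContDiff ℝ 2 m₂) (hm₂per : Per m₂) (hm₂nn : ∀ x, 0 ≤ m₂ x)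
    (hu₂ : ContDiff ℝ 1 u₂) (hu₂per : Per u₂)
    (hflux₂ : ∀ i, ContDiff ℝ 1 (flux H m₂ u₂ i)) :
    ((∫ x in cube d, (F1 H g V m₁ u₁ x - F1 H g V m₂ u₂ x) * (m₁ x - m₂ x))
        + ∫ x in cube d, (F2 H φ m₁ u₁ x - F2 H φ m₂ u₂ x) * (u₁ x - u₂ x))
      = (∫ x in cube d, m₁ x *
            (H (grad u₂ x) - H (grad u₁ x)
              - ∑ i, pd i H (grad u₁ x) * (pd i u₂ x - pd i u₁ x)))
        + (∫ x in cube d, m₂ x *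
            (H (grad u₁ x) - H (grad u₂ x)
              - ∑ i, pd i H (grad u₂ x) * (pd i u₁ x - pd i u₂ x)))
        + ∫ x in cube d, (m₁ x - m₂ x) * (g (m₁ x) - g (m₂ x))
    ∧ 0 ≤ (∫ x in cube d, m₁ x *
            (H (grad u₂ x) - H (grad u₁ x)
              - ∑ i, pd i H (grad u₁ x) * (pd i u₂ x - pd i u₁ x)))
        + (∫ x in cube d, m₂ x *
            (H (grad u₁ x) - H (grad u₂ x)
              - ∑ i, pd i H (grad u₂ x) * (pd i u₁ x - pd i u₂ x)))
        + ∫ x in cube d, (m₁ x - m₂ x) * (g (m₁ x) - g (m₂ x)) := by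
  have hH₁ : ContDiff ℝ 1 H := hH.of_le one_le_two
  exact ⟨integral_pairing_eq H g V φ hH₁ (hgc.comp_continuous hm₁.continuous hm₁nn)
      (hgc.comp_continuous hm₂.continuous hm₂nn) hm₁.continuous hm₁per hu₁ hu₁per hflux₁
      hm₂.continuous hm₂per hu₂ hu₂per hflux₂,
    integral_bregman_add_nonneg H g hHconv (hH₁.differentiable one_ne_zero) hgmono hm₁nn hm₂nn⟩

/-- Monotonicity of the stationary MFG operator
`F(m,u) = (-u - H(Du) + g(m) - V, m - div(m D_pH(Du)) - φ)` on
`C²(𝕋^d;ℝ₀⁺) × C¹(𝕋^d)`: the `L² × L²` pairing of `F(m₁,u₁) - F(m₂,u₂)` with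
`(m₁,u₁) - (m₂,u₂)` equals the sum of the three convexity/monotonicity integrals,
and is nonnegative. -/
theorem stationary_MFG_monotone {d : ℕ}
    (H : Ed d → ℝ) (g : ℝ → ℝ) (V φ : Ed d → ℝ)
    (hH : ContDiff ℝ 2 H) (hHconv : ConvexOn ℝ Set.univ H)
    (hgc : ContinuousOn g (Set.Ici 0)) (hgmono : MonotoneOn g (Set.Ici 0))
    (hV : Continuous V) (hVper : Per V)
    (hφ : Continuous φ) (hφper : Per φ)
    (m₁ u₁ m₂ u₂ : Ed d → ℝ)
    (hm₁ : ContDiff ℝ 2 m₁) (hm₁per : Per m₁) (hm₁nn : ∀ x, 0 ≤ m₁ x)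
    (hu₁ : ContDiff ℝ 1 u₁) (hu₁per : Per u₁)
    (hflux₁ : ∀ i, ContDiff ℝ 1 (flux H m₁ u₁ i))
    (hm₂ : ContDiff ℝ 2 m₂) (hm₂per : Per m₂) (hm₂nn : ∀ x, 0 ≤ m₂ x)
    (hu₂ : ContDiff ℝ 1 u₂) (hu₂per : Per u₂)
    (hflux₂ : ∀ i, ContDiff ℝ 1 (flux H m₂ u₂ i)) :
    ((∫ x in cube d, (F1 H g V m₁ u₁ x - F1 H g V m₂ u₂ x) * (m₁ x - m₂ x))
        + ∫ x in cube d, (F2 H φ m₁ u₁ x - F2 H φ m₂ u₂ x) * (u₁ x - u₂ x))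
      = (∫ x in cube d, m₁ x *
            (H (grad u₂ x) - H (grad u₁ x)
              - ∑ i, pd i H (grad u₁ x) * (pd i u₂ x - pd i u₁ x)))
        + (∫ x in cube d, m₂ x *
            (H (grad u₁ x) - H (grad u₂ x)
              - ∑ i, pd i H (grad u₂ x) * (pd i u₁ x - pd i u₂ x)))
        + ∫ x in cube d, (m₁ x - m₂ x) * (g (m₁ x) - g (m₂ x))
    ∧ 0 ≤ (∫ x in cube d, m₁ x *
            (H (grad u₂ x) - H (grad u₁ x)
              - ∑ i, pd i H (grad u₁ x) * (pd i u₂ x - pd i u₁ x)))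
        + (∫ x in cube d, m₂ x *
            (H (grad u₁ x) - H (grad u₂ x)
              - ∑ i, pd i H (grad u₂ x) * (pd i u₁ x - pd i u₂ x)))
        + ∫ x in cube d, (m₁ x - m₂ x) * (g (m₁ x) - g (m₂ x)) :=
  stationary_MFG_monotone_general H g V φ hH hHconv hgc hgmono m₁ u₁ m₂ u₂ hm₁ hm₁per hm₁nn hu₁
    hu₁per hflux₁ hm₂ hm₂per hm₂nn hu₂ hu₂per hflux₂
end
end

section
/- (Uniform lower bound on the density along the continuation set) Let Λ ⊆ [0,1] and suppose for each λ ∈ Λ there is a smooth solution (m_λ, u_λ) with m_λ > 0 of the penalized regularized MFG, satisfying the uniform a priori bound ∫_{𝕋^d} -p_ε(m_λ)(λφ + 1 - λ) dx ≤ C and sup_λ ‖m_λ‖_{W^{1,∞}(𝕋^d)} ≤ R < ∞, where φ_min = min φ > 0 and p_ε(t) = -t^{-(d+1)} for t ≤ ε/2. Then there exists c > 0 such that inf_{λ ∈ Λ} min_{x ∈ 𝕋^d} m_λ(x) ≥ c. -/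
noncomputable section
open MeasureTheory

set_option maxHeartbeats 1000000 in
/-- Uniform lower bound on the density along the continuation set: if for each `l ∈ Λ`
the smooth positive density `m l` satisfies the uniform penalty bound
`∫ -p_ε(m_l)(lφ + 1 - l) ≤ C` and the uniform `W^{1,∞}` bound (`|m_l| ≤ R` and `m_l`
is `R`-Lipschitz), with `min φ > 0` and `p_ε(t) = -t^{-(d+1)}` for `0 < t ≤ ε/2`,
then the densities are uniformly bounded away from `0`. -/
theorem density_uniform_lower_bound {d : ℕ}
    (ε : ℝ) (hε0 : 0 < ε) (hε1 : ε < 1)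
    (φ : Ed d → ℝ) (hφc : Continuous φ) (hφper : Per φ) (hφpos : ∀ x, 0 < φ x)
    (p : ℝ → ℝ)
    (hpmono : MonotoneOn p (Set.Ioi 0))
    (hple : ∀ t, 0 < t → p t ≤ 0)
    (hplow : ∀ t, 0 < t → t ≤ ε / 2 → p t = -(t ^ (d + 1))⁻¹)
    (Λ : Set ℝ) (hΛ : Λ ⊆ Set.Icc 0 1)
    (m : ℝ → Ed d → ℝ)
    (hmsmooth : ∀ l ∈ Λ, ContDiff ℝ (⊤ : ℕ∞) (m l))
    (hmper : ∀ l ∈ Λ, Per (m l))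
    (hmpos : ∀ l ∈ Λ, ∀ x, 0 < m l x)
    (C R : ℝ) (hR : 0 < R)
    (hmbd : ∀ l ∈ Λ, ∀ x, |m l x| ≤ R)
    (hmlip : ∀ l ∈ Λ, LipschitzWith (Real.toNNReal R) (m l))
    (hbound : ∀ l ∈ Λ,
      (∫ x in cube d, (-(p (m l x))) * (l * φ x + 1 - l)) ≤ C) :
    ∃ c > (0:ℝ), ∀ l ∈ Λ, ∀ x, c ≤ m l x := by
  classical
  have hcube_cpt : IsCompact (cube d) := isCompact_univ_pi fun _ => isCompact_Icc
  have hcube_ne : (cube d).Nonempty := ⟨0, fun i _ => ⟨le_refl 0, zero_le_one⟩⟩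
  have hcube_meas : MeasurableSet (cube d) :=
    MeasurableSet.univ_pi fun _ => measurableSet_Icc
  obtain ⟨x₀, hx₀mem, hx₀min⟩ := hcube_cpt.exists_isMinOn hcube_ne hφc.continuousOn
  set K : ℝ := min (φ x₀) 1 with hKdef
  have hKpos : 0 < K := lt_min (hφpos x₀) one_pos
  have hK1 : K ≤ 1 := min_le_right _ _
  set X : ℝ := R ^ d * 2 ^ (d + 1) with hXdef
  have hXpos : 0 < X := by positivity
  set D : ℝ := max C 0 + 1 with hDdef
  have hDpos : 0 < D := by positivity
  have hCD : C < D := lt_of_le_of_lt (le_max_left C 0) (by simp [hDdef])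
  set c₃ : ℝ := K / (X * D) with hc₃def
  have hc₃pos : 0 < c₃ := by positivity
  refine ⟨min (min (R / 2) (ε / 4)) c₃, by positivity, ?_⟩
  intro l hl x
  by_contra hlt
  push_neg at hlt
  obtain ⟨hl0, hl1⟩ := hΛ hl
  have hmc : Continuous (m l) := (hmsmooth l hl).continuous
  set c₀ : ℝ := m l x with hc₀def
  have hc₀pos : 0 < c₀ := hmpos l hl x
  have hc₀R : c₀ < R / 2 := lt_of_lt_of_le hlt (le_trans (min_le_left _ _) (min_le_left _ _))
  have hc₀ε : c₀ < ε / 4 := lt_of_lt_of_le hlt (le_trans (min_le_left _ _) (min_le_right _ _))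
  have hc₀3 : c₀ < c₃ := lt_of_lt_of_le hlt (min_le_right _ _)
  set r : ℝ := c₀ / R with hrdef
  have hrpos : 0 < r := by positivity
  have hrhalf : r ≤ 1 / 2 := by
    rw [hrdef, div_le_div_iff₀ hR (by norm_num)]
    linarith
  -- reduce x into the cube
  set x' : Ed d := fun i => Int.fract (x i) with hx'def
  have hmx' : m l x' = c₀ := by
    have h1 : x' + (fun i => ((⌊x i⌋ : ℤ) : ℝ)) = x := by
      funext i
      simp [hx'def, Int.fract_add_floor]
    have := hmper l hl x' (fun i => ⌊x i⌋)
    rw [h1] at this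
    rw [hc₀def, ← this]
  -- the small box
  set a : Fin d → ℝ := fun i => if x' i + r ≤ 1 then x' i else x' i - r with hadef
  have hai : ∀ i, 0 ≤ a i ∧ a i + r ≤ 1 ∧ a i ≤ x' i ∧ x' i ≤ a i + r := by
    intro i
    have h0 : 0 ≤ x' i := Int.fract_nonneg _
    have h1 : x' i < 1 := Int.fract_lt_one _
    by_cases h : x' i + r ≤ 1
    · simp only [hadef, if_pos h]
      exact ⟨h0, h, le_refl _, by linarith⟩
    · simp only [hadef, if_neg h]
      push_neg at h
      exact ⟨by linarith, by linarith, by linarith, by linarith⟩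
  set S : Set (Ed d) := Set.univ.pi fun i => Set.Icc (a i) (a i + r) with hSdef
  have hSmeas : MeasurableSet S := MeasurableSet.univ_pi fun _ => measurableSet_Icc
  have hSsub : S ⊆ cube d := by
    intro y hy i _
    have hyi := hy i (Set.mem_univ i)
    obtain ⟨h0, h1, _, _⟩ := hai i
    exact ⟨le_trans h0 hyi.1, le_trans hyi.2 h1⟩
  have hvolS : volume S = ENNReal.ofReal r ^ d := by
    rw [hSdef, volume_pi_pi]
    simp [Real.volume_Icc]
  have hvolS_ne : volume S ≠ ⊤ := by
    rw [hvolS]; exact (ENNReal.pow_ne_top ENNReal.ofReal_ne_top)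
  have hvolS_toReal : (volume S).toReal = r ^ d := by
    rw [hvolS, ENNReal.toReal_pow, ENNReal.toReal_ofReal hrpos.le]
  -- on S, m l is at most 2 c₀
  have hmS : ∀ y ∈ S, m l y ≤ 2 * c₀ := by
    intro y hy
    have hdist : dist y x' ≤ r := by
      rw [dist_pi_le_iff hrpos.le]
      intro i
      have hyi := hy i (Set.mem_univ i)
      obtain ⟨_, _, h2, h3⟩ := hai i
      rw [Real.dist_eq, abs_sub_le_iff]
      constructor <;> linarith [hyi.1, hyi.2]
    have hlip := (hmlip l hl).dist_le_mul y x'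
    rw [Real.coe_toNNReal R hR.le] at hlip
    have : dist (m l y) (m l x') ≤ R * r := le_trans hlip (by
      exact mul_le_mul_of_nonneg_left hdist hR.le)
    rw [Real.dist_eq] at this
    have hRr : R * r = c₀ := by
      rw [hrdef, mul_div_cancel₀ _ hR.ne']
    have := abs_le.mp this
    rw [hmx'] at this
    linarith [this.1, this.2, hRr]
  have h2c : 2 * c₀ ≤ ε / 2 := by linarith
  -- the integrand
  set f : Ed d → ℝ := fun y => (-(p (m l y))) * (l * φ y + 1 - l) with hfdef
  have hwnn : ∀ y, 0 ≤ l * φ y + 1 - l := by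
    intro y
    nlinarith [(hφpos y).le, hl0, hl1]
  have hfnn : ∀ y, 0 ≤ f y := by
    intro y
    exact mul_nonneg (neg_nonneg.2 (hple _ (hmpos l hl y))) (hwnn y)
  -- measurability
  have hqmono : Monotone (fun s => p (Real.exp s)) := fun s t hst =>
    hpmono (Set.mem_Ioi.2 (Real.exp_pos s)) (Set.mem_Ioi.2 (Real.exp_pos t))
      (Real.exp_le_exp.2 hst)
  have hpm : Measurable (fun y => p (m l y)) := by
    have heq : (fun y => p (m l y)) = fun y => (fun s => p (Real.exp s)) (Real.log (m l y)) := by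
      funext y
      simp [Real.exp_log (hmpos l hl y)]
    rw [heq]
    exact hqmono.measurable.comp (Real.measurable_log.comp hmc.measurable)
  have hfm : Measurable f := by
    apply hpm.neg.mul
    fun_prop
  -- integrability on the cube
  obtain ⟨z₀, hz₀mem, hz₀min⟩ := hcube_cpt.exists_isMinOn hcube_ne hmc.continuousOn
  have hδpos : 0 < m l z₀ := hmpos l hl z₀
  obtain ⟨Mφ, hMφ⟩ := hcube_cpt.exists_bound_of_continuousOn hφc.continuousOn
  have hfint : IntegrableOn f (cube d) := by
    apply Measure.integrableOn_of_bounded (M := (-(p (m l z₀))) * (Mφ + 1))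
      hcube_cpt.measure_lt_top.ne hfm.aestronglyMeasurable
    filter_upwards [ae_restrict_mem hcube_meas] with y hy
    have hMy : |φ y| ≤ Mφ := by simpa using hMφ y hy
    have hple1 : p (m l z₀) ≤ p (m l y) :=
      hpmono (Set.mem_Ioi.2 hδpos) (Set.mem_Ioi.2 (hmpos l hl y))
        (isMinOn_iff.mp hz₀min y hy)
    have hw : l * φ y + 1 - l ≤ Mφ + 1 := by
      nlinarith [le_abs_self (φ y), abs_nonneg (φ y), hl0, hl1]
    rw [Real.norm_eq_abs, abs_of_nonneg (hfnn y)]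
    apply mul_le_mul (by linarith) hw (hwnn y) (by linarith [hple _ hδpos])
  -- lower bound for the integrand on S
  have hlow : ∀ y ∈ S, (((2 * c₀) ^ (d + 1))⁻¹ * K) ≤ f y := by
    intro y hy
    have hmy : 0 < m l y := hmpos l hl y
    have hmy2 : m l y ≤ 2 * c₀ := hmS y hy
    have hpv : p (m l y) = -((m l y) ^ (d + 1))⁻¹ :=
      hplow _ hmy (le_trans hmy2 h2c)
    have hinv : ((2 * c₀) ^ (d + 1))⁻¹ ≤ ((m l y) ^ (d + 1))⁻¹ := by
      apply inv_anti₀ (by positivity)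
      exact pow_le_pow_left₀ hmy.le hmy2 _
    have hφy : K ≤ φ y := le_trans (min_le_left _ _) (isMinOn_iff.mp hx₀min y (hSsub hy))
    have hw : K ≤ l * φ y + 1 - l := by
      calc K = l * K + (1 - l) * K := by ring
        _ ≤ l * φ y + (1 - l) * 1 :=
          add_le_add (mul_le_mul_of_nonneg_left hφy hl0)
            (mul_le_mul_of_nonneg_left hK1 (by linarith))
        _ = l * φ y + 1 - l := by ring
    rw [hfdef]
    simp only [hpv, neg_neg]
    exact mul_le_mul hinv hw hKpos.le (by positivity)
  -- integral comparisons
  have h1 : (((2 * c₀) ^ (d + 1))⁻¹ * K) * r ^ d ≤ ∫ y in S, f y := by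
    have := setIntegral_ge_of_const_le_real hSmeas hvolS_ne hlow (hfint.mono_set hSsub)
    rwa [measureReal_def, hvolS_toReal] at this
  have h2 : (∫ y in S, f y) ≤ ∫ y in cube d, f y :=
    setIntegral_mono_set hfint (Filter.Eventually.of_forall hfnn) hSsub.eventuallyLE
  have h3 : (∫ y in cube d, f y) ≤ C := hbound l hl
  -- arithmetic contradiction
  have heq : (((2 * c₀) ^ (d + 1))⁻¹ * K) * r ^ d = K / (X * c₀) := by
    rw [hrdef, hXdef, div_pow, mul_pow, pow_succ]
    field_simp
    ring
  have hfin : K / (X * c₃) < K / (X * c₀) :=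
    div_lt_div_of_pos_left hKpos (by positivity) ((mul_lt_mul_iff_right₀ hXpos).2 hc₀3)
  have hc3eq : K / (X * c₃) = D := by
    rw [hc₃def]
    field_simp
  rw [heq] at h1
  rw [hc3eq] at hfin
  linarith
end
end
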